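/- arXiv:cs/0506008 — 4 statements merged into one kernel-verified Lean document; each statement's English description precedes it below -/
import Mathlib

section
/- Let ρ ≥ 2, let t be a homogeneous term in r variables, and let η be its infinite-state transition function with extension η̂ to words. For all p, q ∈ ℤ: there exist N, a_1, …, a_r ∈ ℕ such that N ≥ ⌈log_ρ(1 + max{a_1,…,a_r})⌉ and ρ^N·p + t[a_1,…,a_r] = q, if and only if there exists a word w ∈ (Σ^r)^* such that η̂(p, w) = q. -/
namespace Presburger

/-- A letter of the alphabet `Σ^r`, where `Σ = {0, …, ρ-1}`. -/
abbrev Letter (ρ r : ℕ) := Fin r → Fin ρ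

/-- The natural number encoded by a word over `Σ` (most significant digit first). -/
def natVal (ρ : ℕ) (w : List ℕ) : ℕ := w.foldl (fun acc b => ρ * acc + b) 0

/-- The integer encoded by a nonempty word over `Σ` (ρ's complement,
most significant digit first); the empty word gets the junk value `0`. -/
def intVal (ρ : ℕ) : List ℕ → ℤ
  | [] => 0
  | b :: u => (natVal ρ u : ℤ) - (if b = 0 then 0 else (ρ : ℤ) ^ u.length)

/-- The tuple of natural numbers encoded track-wise by a word over `Σ^r` (as integers). -/
def natVec (ρ r : ℕ) (w : List (Letter ρ r)) : Fin r → ℤ :=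
  fun i => (natVal ρ (w.map fun b => (b i : ℕ)) : ℤ)

/-- The tuple of integers encoded track-wise by a nonempty word over `Σ^r`. -/
def intVec (ρ r : ℕ) (w : List (Letter ρ r)) : Fin r → ℤ :=
  fun i => intVal ρ (w.map fun b => (b i : ℕ))

/-- A language over `Σ^r` represents a set `U ⊆ ℤ^r` if it consists exactly of the
nonempty words encoding a member of `U`. -/
def Represents (ρ r : ℕ) (L : Language (Letter ρ r)) (U : Set (Fin r → ℤ)) : Prop :=
  ∀ w : List (Letter ρ r), w ∈ L ↔ (w ≠ [] ∧ intVec ρ r w ∈ U)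

/-- A DFA represents `U ⊆ ℤ^r` if its accepted language does. -/
def DFARepresents (ρ r : ℕ) {σ : Type*} (M : DFA (Letter ρ r) σ) (U : Set (Fin r → ℤ)) : Prop :=
  Represents ρ r M.accepts U

/-- Value of the homogeneous term with coefficients `k` at the point `a`. -/
def tval {r : ℕ} (k : Fin r → ℤ) (a : Fin r → ℤ) : ℤ := ∑ i, k i * a i

/-- A homogeneous term is `0` or has all its coefficients nonzero. -/
def Homog {r : ℕ} (k : Fin r → ℤ) : Prop := k = 0 ∨ ∀ i, k i ≠ 0

/-- `σ(b)`: componentwise `0` if the digit is `0` and `-1` otherwise. -/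
def sgnLetter {ρ r : ℕ} (b : Letter ρ r) : Fin r → ℤ :=
  fun i => if (b i : ℕ) = 0 then 0 else -1

/-- The letter `b` viewed as a tuple of integers. -/
def letterInt {ρ r : ℕ} (b : Letter ρ r) : Fin r → ℤ := fun i => ((b i : ℕ) : ℤ)

/-- `‖t‖⁺`: the sum of the positive coefficients of `t`. -/
def posNorm {r : ℕ} (k : Fin r → ℤ) : ℤ := ∑ i, max (k i) 0

/-- `‖t‖⁻`: the sum of the absolute values of the negative coefficients of `t`. -/
def negNorm {r : ℕ} (k : Fin r → ℤ) : ℤ := ∑ i, max (-k i) 0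

/-- `gcd(t)`: the gcd of the absolute values of the coefficients of `t`. -/
def gcdT {r : ℕ} (k : Fin r → ℤ) : ℕ := Finset.univ.gcd fun i => (k i).natAbs

/-- The transition function `η` of the infinite-state automaton for `t`,
restricted to the integer states: `η(q, b) = ρ·q + t[b]`. -/
def etaStep (ρ : ℕ) {r : ℕ} (k : Fin r → ℤ) (q : ℤ) (b : Letter ρ r) : ℤ :=
  ρ * q + tval k (letterInt b)

/-- The transition of `η` out of the initial state: `η(q_I, b) = t[σ(b)]`. -/
def etaInit (ρ : ℕ) {r : ℕ} (k : Fin r → ℤ) (b : Letter ρ r) : ℤ :=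
  tval k (sgnLetter b)

/-- A state `q` is small (for `t ⋈ c`) if `q < min{c, -‖t‖⁺}`. -/
def IsSmall {r : ℕ} (k : Fin r → ℤ) (c q : ℤ) : Prop := q < min c (-posNorm k)

/-- A state `q` is large (for `t ⋈ c`) if `q > max{c, ‖t‖⁻}`. -/
def IsLarge {r : ℕ} (k : Fin r → ℤ) (c q : ℤ) : Prop := max c (negNorm k) < q

/-- The six relations `=, ≠, <, ≤, >, ≥` on `ℤ`. -/
def rel6 : Set (ℤ → ℤ → Prop) :=
  {fun x y => x = y, fun x y => x ≠ y, fun x y => x < y,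
   fun x y => x ≤ y, fun x y => x > y, fun x y => x ≥ y}

/-- Clamp an integer into the state set `{m, …, n}`; yields `none` (the initial state)
only in the degenerate case `m > n`, which never occurs for small `m` and large `n`. -/
noncomputable def clampSt (m n x : ℤ) : Option ↥(Finset.Icc m n) :=
  if h : max m (min n x) ∈ Finset.Icc m n then some ⟨max m (min n x), h⟩ else none

/-- The DFA `A^{t ⋈ c}_{(m,n)}` for the (in)equation `t ⋈ c`: states are
`q_I = none` together with `{m, …, n}`, transitions clamp `η` to `[m, n]`, and the
accepting states are the integer states `q` with `q ⋈ c`. -/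
noncomputable def ineqDFA (ρ : ℕ) {r : ℕ} (k : Fin r → ℤ) (m n : ℤ) (rel : ℤ → ℤ → Prop) (c : ℤ) :
    DFA (Letter ρ r) (Option ↥(Finset.Icc m n)) where
  step q b :=
    match q with
    | none => clampSt m n (etaInit ρ k b)
    | some z => clampSt m n (etaStep ρ k z.val b)
  start := none
  accept := {q | ∃ z : ↥(Finset.Icc m n), q = some z ∧ rel z.val c}

/-- Two states of a DFA are equivalent if they accept exactly the same words. -/
def stEquiv {α : Type*} {σ : Type*} (M : DFA α σ) (p q : σ) : Prop :=
  ∀ w : List α, (M.evalFrom p w ∈ M.accept ↔ M.evalFrom q w ∈ M.accept)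

end Presburger

/-!
Reading `w` from `p` gives `η̂(p, w) = ρ^|w|·p + t[⟨w⟩]`, where `⟨w⟩` is the tuple of naturals
that `w` encodes track-wise, most significant digit first. Words of length `N` encode exactly the
tuples with all entries below `ρ^N`, and that is what `⌈log_ρ(1 + max aᵢ)⌉ ≤ N` says.
-/

namespace Presburger

lemma tval_eq_dotProduct {r : ℕ} (k a : Fin r → ℤ) : tval k a = k ⬝ᵥ a := rfl

lemma natVal_append_singleton (ρ d : ℕ) (u : List ℕ) :
    natVal ρ (u ++ [d]) = ρ * natVal ρ u + d := by
  simp [natVal, List.foldl_append]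

lemma natVal_lt_pow_length {ρ : ℕ} {u : List ℕ} (hu : ∀ d ∈ u, d < ρ) :
    natVal ρ u < ρ ^ u.length := by
  induction u using List.reverseRecOn with
  | nil => simp [natVal]
  | append_singleton u d ih =>
    have hd : d < ρ := hu d (by simp)
    have hu' : natVal ρ u + 1 ≤ ρ ^ u.length := ih fun x hx => hu x (by simp [hx])
    rw [natVal_append_singleton, List.length_append, List.length_singleton, pow_succ]
    nlinarith

lemma natVec_append_singleton (ρ r : ℕ) (w : List (Letter ρ r)) (b : Letter ρ r) :
    natVec ρ r (w ++ [b]) = (ρ : ℤ) • natVec ρ r w + letterInt b := by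
  ext i
  simp [natVec, letterInt, natVal_append_singleton]

lemma natVal_track_lt_pow_length {ρ r : ℕ} (w : List (Letter ρ r)) (i : Fin r) :
    natVal ρ (w.map fun b => (b i : ℕ)) < ρ ^ w.length := by
  simpa using natVal_lt_pow_length (ρ := ρ) (u := w.map fun b => (b i : ℕ)) (by simp)

theorem foldl_etaStep (ρ : ℕ) {r : ℕ} (k : Fin r → ℤ) (p : ℤ) (w : List (Letter ρ r)) :
    w.foldl (etaStep ρ k) p = (ρ : ℤ) ^ w.length * p + tval k (natVec ρ r w) := by
  induction w using List.reverseRecOn with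
  | nil => simp [natVec, natVal, tval]
  | append_singleton w b ih =>
    rw [List.foldl_append, List.foldl_cons, List.foldl_nil, ih, etaStep, natVec_append_singleton]
    simp only [tval_eq_dotProduct, dotProduct_add, dotProduct_smul, List.length_append,
      List.length_singleton, pow_succ, smul_eq_mul]
    ring

/-- Most significant digit first; only the `N` lowest base-`ρ` digits of each `a i` are kept. -/
def digitsWord (ρ r : ℕ) (hρ : 0 < ρ) : ℕ → (Fin r → ℕ) → List (Letter ρ r)
  | 0, _ => []
  | N + 1, a => digitsWord ρ r hρ N (fun i => a i / ρ) ++ [fun i => ⟨a i % ρ, Nat.mod_lt _ hρ⟩]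

lemma length_digitsWord (ρ r : ℕ) (hρ : 0 < ρ) (N : ℕ) (a : Fin r → ℕ) :
    (digitsWord ρ r hρ N a).length = N := by
  induction N generalizing a with
  | zero => rfl
  | succ N ih => simp [digitsWord, ih]

lemma natVec_digitsWord {ρ r : ℕ} (hρ : 0 < ρ) {N : ℕ} {a : Fin r → ℕ}
    (ha : ∀ i, a i < ρ ^ N) : natVec ρ r (digitsWord ρ r hρ N a) = fun i => (a i : ℤ) := by
  induction N generalizing a with
  | zero =>
    ext i
    simp_all [digitsWord, natVec, natVal]
  | succ N ih =>
    have ha' : ∀ i, a i / ρ < ρ ^ N := fun i =>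
      (Nat.div_lt_iff_lt_mul hρ).2 (pow_succ ρ N ▸ ha i)
    ext i
    rw [digitsWord, natVec_append_singleton, ih ha']
    simp only [Pi.add_apply, Pi.smul_apply, smul_eq_mul, letterInt]
    exact_mod_cast Nat.div_add_mod (a i) ρ

lemma clog_one_add_sup_le_iff {ι : Type*} [Fintype ι] {b : ℕ} (hb : 1 < b) (a : ι → ℕ)
    (N : ℕ) : Nat.clog b (1 + Finset.univ.sup a) ≤ N ↔ ∀ i, a i < b ^ N := by
  rw [Nat.clog_le_iff_le_pow hb, Nat.one_add_le_iff,
    Finset.sup_lt_iff (bot_lt_iff_ne_bot.2 (pow_pos (by omega) N).ne')]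
  simp

theorem stmt_1_general (ρ r : ℕ) (hρ : 2 ≤ ρ) (k : Fin r → ℤ) (p q : ℤ) :
    (∃ (N : ℕ) (a : Fin r → ℕ),
        Nat.clog ρ (1 + Finset.univ.sup a) ≤ N ∧
        (ρ : ℤ) ^ N * p + tval k (fun i => (a i : ℤ)) = q) ↔
    (∃ w : List (Letter ρ r), w.foldl (etaStep ρ k) p = q) := by
  simp only [clog_one_add_sup_le_iff hρ, foldl_etaStep]
  constructor
  · rintro ⟨N, a, ha, rfl⟩
    refine ⟨digitsWord ρ r (by omega) N a, ?_⟩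
    rw [length_digitsWord, natVec_digitsWord _ ha]
  · rintro ⟨w, rfl⟩
    exact ⟨w.length, fun i => natVal ρ (w.map fun b => (b i : ℕ)),
      natVal_track_lt_pow_length w, rfl⟩

/-- Lemma `reachability_question`.
For integer states `p, q`: there are `N, a_1, …, a_r ∈ ℕ` with
`N ≥ ⌈log_ρ(1 + max{a_1,…,a_r})⌉` and `ρ^N·p + t[a] = q`, iff some word `w`
satisfies `η̂(p, w) = q`. -/
theorem stmt_1 (ρ r : ℕ) (hρ : 2 ≤ ρ) (k : Fin r → ℤ) (hk : Homog k) (p q : ℤ) :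
    (∃ (N : ℕ) (a : Fin r → ℕ),
        Nat.clog ρ (1 + Finset.univ.sup a) ≤ N ∧
        (ρ : ℤ) ^ N * p + tval k (fun i => (a i : ℤ)) = q) ↔
    (∃ w : List (Letter ρ r), w.foldl (etaStep ρ k) p = q) :=
  stmt_1_general ρ r hρ k p q
end Presburger
end

section
/- Let t > c be a normalized inequation with c ≥ 0 and gcd(t) = 1, and let A = A^{t>c}_{(m,n)} with m = max{q ∈ ℤ : q is small} and n = min{q ∈ ℤ : q is large}. Define the strictly decreasing sequence d_0 > d_1 > … > d_ℓ by: d_0 := ∞, d_1 := max{c+1, ||t||^−}, and, as long as d_i > ||t||^−, d_{i+1} is the smallest integer greater than ||t||^− − 1 such that for every b ∈ Σ^r there is an index j with 1 ≤ j ≤ i and both ρ·d_{i+1} + t[b] and ρ·(d_i − 1) + t[b] lie in [d_j, d_{j−1}); the sequence ends with d_ℓ = ||t||^−. Let R := {m, m+1} (the two smallest integer states, i.e., −||t||^+ − 1 and −||t||^+). Then for all states p, q of A: p ∼ q (p and q are equivalent, i.e., accept the same words) if and only if p = q, or p, q ∈ R, or p, q ∈ [d_i, d_{i−1}) for some 1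 ≤ i ≤ ℓ. -/
namespace Presburger

/-- `y ∈ [d_i, d_{i-1})`, where `d_0 = ∞` (so for `i = 1` there is no upper bound). -/
def memIvl (d : ℕ → ℤ) (i : ℕ) (y : ℤ) : Prop :=
  d i ≤ y ∧ (i = 1 ∨ y < d (i - 1))

/-- The defining property of the next member `x = d_{i+1}` of the sequence:
for every letter `b` there is an index `1 ≤ j ≤ i` such that both
`ρ·x + t[b]` and `ρ·(d_i - 1) + t[b]` lie in `[d_j, d_{j-1})`. -/
def seqStepProp (ρ : ℕ) {r : ℕ} (k : Fin r → ℤ) (d : ℕ → ℤ) (i : ℕ) (x : ℤ) : Prop :=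
  ∀ b : Letter ρ r, ∃ j, 1 ≤ j ∧ j ≤ i ∧
    memIvl d j (ρ * x + tval k (letterInt b)) ∧
    memIvl d j (ρ * (d i - 1) + tval k (letterInt b))

/-!
Reading a word `w` from an integer state `z` leads to `ρ^|w|·z + t[w]` clamped to `[m, n]`,
where `t[w]` is the value of `t` at the numbers spelled by the tracks of `w`. Clamping is
invisible, so equivalence of integer states is the arithmetic relation `ValEquiv`.

Values `≤ -‖t‖⁺` reject every word, and every larger value accepts after enough maximal digits
on the positive coefficients. A value `y` strictly between `-‖t‖⁺` and `‖t‖⁻` is separated from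
every other value by one word, because `gcd(t) = 1` lets `t` hit the exact threshold
`c + 1 - ρ^s·y` on `s`-digit vectors. For values `≥ ‖t‖⁻`, the defining property of `d_{i+1}`
says that each letter maps the whole class `[d_{i+1}, d_i)` into a single class, so a class
consists of equivalent values (induction on the length of the word); minimality of `d_{i+1}`
gives, for a value below it, a letter sending it to a different class than the class
`[d_{i+1}, d_i)`, so distinct classes are inequivalent (induction on the class index).
-/

section Term

variable {r : ℕ} (k : Fin r → ℤ)

lemma posNorm_nonneg : 0 ≤ posNorm k :=
  Finset.sum_nonneg fun _ _ => le_max_right _ _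

lemma negNorm_nonneg : 0 ≤ negNorm k :=
  Finset.sum_nonneg fun _ _ => le_max_right _ _

lemma posNorm_neg : posNorm (-k) = negNorm k := rfl

lemma negNorm_neg : negNorm (-k) = posNorm k := by
  simp only [negNorm, posNorm, Pi.neg_apply, neg_neg]

lemma le_posNorm (i : Fin r) : k i ≤ posNorm k :=
  (le_max_left _ _).trans <|
    Finset.single_le_sum (f := fun j => max (k j) 0) (fun _ _ => le_max_right _ _)
      (Finset.mem_univ i)

lemma neg_le_negNorm (i : Fin r) : -k i ≤ negNorm k :=
  le_posNorm (-k) i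

lemma tval_neg_left (v : Fin r → ℤ) : tval (-k) v = -tval k v := by
  simp only [tval, Pi.neg_apply, neg_mul, Finset.sum_neg_distrib]

lemma tval_zero_right : tval k 0 = 0 := by
  simp [tval]

lemma tval_mul_add (A : ℤ) (b v : Fin r → ℤ) :
    tval k (fun i => A * b i + v i) = A * tval k b + tval k v := by
  simp only [tval, Finset.mul_sum, ← Finset.sum_add_distrib]
  exact Finset.sum_congr rfl fun i _ => by ring

lemma tval_ite_pos (a b : ℤ) :
    tval k (fun i => if 0 < k i then a else b) = a * posNorm k - b * negNorm k := by
  rw [tval, posNorm, negNorm, Finset.mul_sum, Finset.mul_sum, ← Finset.sum_sub_distrib]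
  refine Finset.sum_congr rfl fun i _ => ?_
  split_ifs with h
  · rw [max_eq_left h.le, max_eq_right (by omega)]; ring
  · rw [max_eq_right (not_lt.mp h), max_eq_left (by omega)]; ring

lemma tval_mem_Icc {M : ℤ} {v : Fin r → ℤ} (hv : ∀ i, 0 ≤ v i ∧ v i ≤ M) :
    -(M * negNorm k) ≤ tval k v ∧ tval k v ≤ M * posNorm k := by
  constructor
  · calc -(M * negNorm k) = tval k (fun i => if 0 < k i then 0 else M) := by
          rw [tval_ite_pos]; ring
      _ ≤ tval k v := Finset.sum_le_sum fun i _ => by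
          dsimp only; split_ifs with h <;> nlinarith [hv i]
  · calc tval k v ≤ tval k (fun i => if 0 < k i then M else 0) :=
          Finset.sum_le_sum fun i _ => by dsimp only; split_ifs with h <;> nlinarith [hv i]
      _ = M * posNorm k := by rw [tval_ite_pos]; ring

variable {k}

lemma exists_sum_mul_eq_one (hgcd : gcdT k = 1) : ∃ u : Fin r → ℤ, ∑ i, k i * u i = 1 := by
  obtain ⟨g, hg⟩ := Finset.gcd_eq_sum_mul Finset.univ k
  have hd : (Finset.univ.gcd k).natAbs ∣ 1 := hgcd ▸ Finset.dvd_gcd fun i _ =>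
    Int.natAbs_dvd_natAbs.mpr (Finset.gcd_dvd (Finset.mem_univ i))
  rcases Int.natAbs_eq_iff.mp (Nat.dvd_one.mp hd) with h | h
  · exact ⟨g, by rw [← hg, h]; rfl⟩
  · refine ⟨fun i => -g i, ?_⟩
    simp only [mul_neg, Finset.sum_neg_distrib, ← hg, h]
    rfl

lemma one_le_posNorm_add_negNorm (hgcd : gcdT k = 1) : 1 ≤ posNorm k + negNorm k := by
  obtain ⟨u, hu⟩ := exists_sum_mul_eq_one hgcd
  by_contra! h
  have hk : ∀ i, k i = 0 := fun i => by
    have := le_posNorm k i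
    have := neg_le_negNorm k i
    have := posNorm_nonneg k
    have := negNorm_nonneg k
    omega
  simp [hk] at hu

/-- Witness: `(B + q)·[k > 0] + B·[k ≤ 0] + δ·u`, where `E = q·‖t‖⁺ + δ` and `u` is a Bézout
vector; the margin `B` absorbs the correction `δ·u`. -/
lemma exists_tval_eq_add {u : Fin r → ℤ} (hu : ∑ i, k i * u i = 1) {B M E : ℤ}
    (hB : (posNorm k + negNorm k) * ∑ i, |u i| ≤ B) (hM : 2 * B ≤ M) (hE0 : 0 ≤ E)
    (hE : E ≤ (M - 2 * B) * posNorm k) :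
    ∃ v : Fin r → ℤ, (∀ i, 0 ≤ v i ∧ v i ≤ M) ∧
      tval k v = B * (posNorm k - negNorm k) + E := by
  have hP := posNorm_nonneg k
  have hN := negNorm_nonneg k
  obtain ⟨q, δ, hEqδ, hδ0, hδ, hq0, hq⟩ : ∃ q δ : ℤ, E = posNorm k * q + δ ∧ 0 ≤ δ ∧
      δ ≤ posNorm k + negNorm k ∧ 0 ≤ q ∧ q ≤ M - 2 * B := by
    rcases hP.eq_or_lt with hP0 | hP0
    · exact ⟨0, 0, by rw [← hP0] at hE; linarith, le_rfl, by linarith, le_rfl, by linarith⟩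
    · have hq := Int.mul_ediv_add_emod E (posNorm k)
      have hδ := Int.emod_lt_of_pos E hP0
      have hδ0 := Int.emod_nonneg E hP0.ne'
      refine ⟨E / posNorm k, E % posNorm k, hq.symm, hδ0, by linarith,
        Int.ediv_nonneg hE0 hP0.le, ?_⟩
      nlinarith
  refine ⟨fun i => δ * u i + if 0 < k i then B + q else B, fun i => ?_, ?_⟩
  · have hδu : |δ * u i| ≤ B :=
      calc |δ * u i| = δ * |u i| := by rw [abs_mul, abs_of_nonneg hδ0]
        _ ≤ (posNorm k + negNorm k) * ∑ j, |u j| :=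
          mul_le_mul hδ (Finset.single_le_sum (f := fun j => |u j|)
            (fun _ _ => abs_nonneg _) (Finset.mem_univ i)) (abs_nonneg _) (by linarith)
        _ ≤ B := hB
    have := abs_le.mp hδu
    dsimp only
    split_ifs <;> constructor <;> linarith
  · rw [tval_mul_add, tval_ite_pos, tval, hu, hEqδ]
    ring

lemma exists_tval_eq (hgcd : gcdT k = 1) :
    ∃ C : ℤ, ∀ M z : ℤ, C - M * negNorm k ≤ z → z ≤ M * posNorm k - C →
      ∃ v : Fin r → ℤ, (∀ i, 0 ≤ v i ∧ v i ≤ M) ∧ tval k v = z := by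
  obtain ⟨u, hu⟩ := exists_sum_mul_eq_one hgcd
  have hPN := one_le_posNorm_add_negNorm hgcd
  set B := (posNorm k + negNorm k) * ∑ i, |u i| with hB
  have hB0 : 0 ≤ B := mul_nonneg (by linarith) (Finset.sum_nonneg fun _ _ => abs_nonneg _)
  refine ⟨B * (posNorm k + negNorm k), fun M z hz1 hz2 => ?_⟩
  have hM : 2 * B ≤ M := by nlinarith
  rcases le_total (B * (posNorm k - negNorm k)) z with h | h
  · obtain ⟨v, hv, hvz⟩ := exists_tval_eq_add hu hB.ge hM (E := z - B * (posNorm k - negNorm k))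
      (by linarith) (by linarith)
    exact ⟨v, hv, by rw [hvz]; ring⟩
  · have hu' : ∑ i, (-k) i * (-u) i = 1 := by simpa using hu
    have hB' : (posNorm (-k) + negNorm (-k)) * ∑ i, |(-u) i| ≤ B := by
      simp only [posNorm_neg, negNorm_neg, Pi.neg_apply, abs_neg]
      linarith
    obtain ⟨v, hv, hvz⟩ := exists_tval_eq_add hu' hB' hM
      (E := B * (posNorm k - negNorm k) - z) (by linarith)
      (by rw [posNorm_neg]; linarith)
    rw [tval_neg_left, posNorm_neg, negNorm_neg] at hvz
    exact ⟨v, hv, by linarith⟩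

end Term


section Words

variable {ρ r : ℕ}

def DigitBox (ρ s : ℕ) {r : ℕ} (v : Fin r → ℤ) : Prop :=
  ∀ i, 0 ≤ v i ∧ v i < (ρ : ℤ) ^ s

lemma letterInt_mem (b : Letter ρ r) (i : Fin r) :
    0 ≤ letterInt b i ∧ letterInt b i ≤ (ρ : ℤ) - 1 := by
  have := (b i).isLt
  simp only [letterInt]
  omega

lemma DigitBox.eq_zero {v : Fin r → ℤ} (hv : DigitBox ρ 0 v) : v = 0 :=
  funext fun i => by have := hv i; rw [pow_zero] at this; simp only [Pi.zero_apply]; omega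

lemma DigitBox.cons {s : ℕ} {v : Fin r → ℤ} (hv : DigitBox ρ s v) (b : Letter ρ r) :
    DigitBox ρ (s + 1) (fun i => (ρ : ℤ) ^ s * letterInt b i + v i) := fun i => by
  have hb := letterInt_mem b i
  have hpow : (0 : ℤ) ≤ (ρ : ℤ) ^ s := by positivity
  constructor <;> nlinarith [hv i, pow_succ (ρ : ℤ) s]

lemma DigitBox.exists_cons (hρ : 0 < ρ) {s : ℕ} {v : Fin r → ℤ} (hv : DigitBox ρ (s + 1) v) :
    ∃ (b : Letter ρ r) (v' : Fin r → ℤ), DigitBox ρ s v' ∧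
      v = fun i => (ρ : ℤ) ^ s * letterInt b i + v' i := by
  have hpow : (0 : ℤ) < (ρ : ℤ) ^ s := by positivity
  have hdigit : ∀ i, 0 ≤ v i / (ρ : ℤ) ^ s ∧ v i / (ρ : ℤ) ^ s < ρ := fun i => by
    have := hv i
    rw [pow_succ] at this
    exact ⟨Int.ediv_nonneg this.1 hpow.le, Int.ediv_lt_of_lt_mul hpow (by linarith)⟩
  refine ⟨fun i => ⟨(v i / (ρ : ℤ) ^ s).toNat, by have := hdigit i; omega⟩,
    fun i => v i % (ρ : ℤ) ^ s,
    fun i => ⟨Int.emod_nonneg _ hpow.ne', Int.emod_lt_of_pos _ hpow⟩, funext fun i => ?_⟩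
  simp only [letterInt, Int.toNat_of_nonneg (hdigit i).1]
  exact (Int.mul_ediv_add_emod _ _).symm

lemma DigitBox.tval_mem_Icc {s : ℕ} {v : Fin r → ℤ} (hv : DigitBox ρ s v) (k : Fin r → ℤ) :
    -(((ρ : ℤ) ^ s - 1) * negNorm k) ≤ tval k v ∧ tval k v ≤ ((ρ : ℤ) ^ s - 1) * posNorm k :=
  Presburger.tval_mem_Icc k fun i => ⟨(hv i).1, by linarith [(hv i).2]⟩

lemma foldl_digits_eq (u : List ℕ) (a : ℕ) :
    u.foldl (fun acc b => ρ * acc + b) a = a * ρ ^ u.length + natVal ρ u := by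
  induction u generalizing a with
  | nil => simp [natVal]
  | cons x u ih =>
    rw [List.foldl_cons, ih, List.length_cons,
      show natVal ρ (x :: u) = (ρ * 0 + x) * ρ ^ u.length + natVal ρ u from ih _]
    ring

lemma natVal_cons (b : ℕ) (u : List ℕ) : natVal ρ (b :: u) = b * ρ ^ u.length + natVal ρ u := by
  rw [natVal, List.foldl_cons, mul_zero, zero_add, foldl_digits_eq]

lemma natVec_nil : natVec ρ r [] = 0 := by
  funext i
  simp [natVec, natVal]

lemma natVec_cons (b : Letter ρ r) (w : List (Letter ρ r)) :
    natVec ρ r (b :: w) = fun i => (ρ : ℤ) ^ w.length * letterInt b i + natVec ρ r w i := by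
  funext i
  simp only [natVec, List.map_cons, natVal_cons, List.length_map, letterInt]
  push_cast
  ring

lemma digitBox_natVec (w : List (Letter ρ r)) : DigitBox ρ w.length (natVec ρ r w) := by
  induction w with
  | nil => rw [natVec_nil]; exact fun _ => ⟨le_rfl, by simp⟩
  | cons b w ih => rw [natVec_cons]; exact ih.cons b

lemma exists_natVec_eq (hρ : 0 < ρ) {s : ℕ} {v : Fin r → ℤ} (hv : DigitBox ρ s v) :
    ∃ w : List (Letter ρ r), w.length = s ∧ natVec ρ r w = v := by
  induction s generalizing v with
  | zero => exact ⟨[], rfl, by rw [natVec_nil, hv.eq_zero]⟩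
  | succ s ih =>
    obtain ⟨b, v', hv', rfl⟩ := hv.exists_cons hρ
    obtain ⟨w, rfl, rfl⟩ := ih hv'
    exact ⟨b :: w, rfl, natVec_cons b w⟩

lemma pow_succ_mul_add_tval (k : Fin r → ℤ) (s : ℕ) (x : ℤ) (b : Letter ρ r) (v : Fin r → ℤ) :
    (ρ : ℤ) ^ (s + 1) * x + tval k (fun i => (ρ : ℤ) ^ s * letterInt b i + v i) =
      (ρ : ℤ) ^ s * ((ρ : ℤ) * x + tval k (letterInt b)) + tval k v := by
  rw [tval_mul_add, pow_succ]
  ring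

end Words

/-- Reading the digits of an `s`-digit vector `v` leads the infinite automaton from the value
`x` to `ρ^s·x + t[v]`; this is equivalence of states expressed through that formula. -/
def ValEquiv (ρ : ℕ) {r : ℕ} (k : Fin r → ℤ) (c x y : ℤ) : Prop :=
  ∀ (s : ℕ) (v : Fin r → ℤ), DigitBox ρ s v →
    (c < (ρ : ℤ) ^ s * x + tval k v ↔ c < (ρ : ℤ) ^ s * y + tval k v)

namespace ValEquiv

variable {ρ r : ℕ} {k : Fin r → ℤ} {c x y : ℤ}

lemma refl (x : ℤ) : ValEquiv ρ k c x x := fun _ _ _ => Iff.rfl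

lemma symm (h : ValEquiv ρ k c x y) : ValEquiv ρ k c y x := fun s v hv => (h s v hv).symm

lemma lt_iff (h : ValEquiv ρ k c x y) : c < x ↔ c < y := by
  simpa [tval_zero_right] using h 0 0 fun _ => by simp

lemma step (h : ValEquiv ρ k c x y) (b : Letter ρ r) :
    ValEquiv ρ k c ((ρ : ℤ) * x + tval k (letterInt b)) ((ρ : ℤ) * y + tval k (letterInt b)) :=
  fun s v hv => by simpa only [pow_succ_mul_add_tval] using h (s + 1) _ (hv.cons b)

end ValEquiv

lemma stEquiv_comm {α σ : Type*} {M : DFA α σ} {p q : σ} : stEquiv M p q ↔ stEquiv M q p :=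
  ⟨fun h w => (h w).symm, fun h w => (h w).symm⟩

section Automaton

variable {ρ r : ℕ} {k : Fin r → ℤ} {c m n : ℤ}

lemma le_of_isSmall_of_isLarge (hm : IsSmall k c m) (hn : IsLarge k c n) : m ≤ n := by
  simp only [IsSmall, IsLarge] at hm hn
  omega

lemma clampSt_eq (hmn : m ≤ n) (x : ℤ) :
    clampSt m n x = some ⟨max m (min n x), Finset.mem_Icc.mpr ⟨le_max_left _ _,
      max_le hmn (min_le_left _ _)⟩⟩ :=
  dif_pos _

lemma clampSt_congr {x x' : ℤ} (h : max m (min n x) = max m (min n x')) :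
    clampSt m n x = clampSt m n x' := by
  simp only [clampSt, h]

/-- Values below `m < -‖t‖⁺` stay below `m`, and values above `n > ‖t‖⁻` stay above `n`. -/
lemma clamp_pow_mul_add (hm : IsSmall k c m) (hn : IsLarge k c n) (hρ : 0 < ρ) {s : ℕ}
    {v : Fin r → ℤ} (hv : DigitBox ρ s v) (y : ℤ) :
    max m (min n ((ρ : ℤ) ^ s * max m (min n y) + tval k v)) =
      max m (min n ((ρ : ℤ) ^ s * y + tval k v)) := by
  simp only [IsSmall, IsLarge] at hm hn
  have hR : (1 : ℤ) ≤ (ρ : ℤ) ^ s := one_le_pow₀ (by exact_mod_cast hρ)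
  obtain ⟨hT1, hT2⟩ := hv.tval_mem_Icc k
  have hP := posNorm_nonneg k
  have hN := negNorm_nonneg k
  rcases le_or_gt y m with hy | hy
  · have h1 : (ρ : ℤ) ^ s * y + tval k v ≤ m := by nlinarith [min_le_right c (-posNorm k)]
    have h2 : (ρ : ℤ) ^ s * max m (min n y) + tval k v ≤ m := by
      rw [show max m (min n y) = m by omega]
      nlinarith [min_le_right c (-posNorm k)]
    omega
  rcases le_or_gt y n with hy' | hy'
  · rw [show max m (min n y) = y by omega]
  · have h1 : n ≤ (ρ : ℤ) ^ s * y + tval k v := by nlinarith [le_max_right c (negNorm k)]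
    have h2 : n ≤ (ρ : ℤ) ^ s * max m (min n y) + tval k v := by
      rw [show max m (min n y) = n by omega]
      nlinarith [le_max_right c (negNorm k)]
    omega

lemma evalFrom_clampSt (hm : IsSmall k c m) (hn : IsLarge k c n) (hρ : 0 < ρ)
    (rel : ℤ → ℤ → Prop) (w : List (Letter ρ r)) (y : ℤ) :
    (ineqDFA ρ k m n rel c).evalFrom (clampSt m n y) w =
      clampSt m n ((ρ : ℤ) ^ w.length * y + tval k (natVec ρ r w)) := by
  have hmn := le_of_isSmall_of_isLarge hm hn
  induction w generalizing y with
  | nil => simp [natVec_nil, tval_zero_right]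
  | cons b u ih =>
    have hstep : (ineqDFA ρ k m n rel c).step (clampSt m n y) b =
        clampSt m n ((ρ : ℤ) * max m (min n y) + tval k (letterInt b)) := by
      rw [clampSt_eq hmn]
      rfl
    rw [DFA.evalFrom_cons, hstep, ih, ← pow_succ_mul_add_tval, ← natVec_cons]
    exact clampSt_congr (clamp_pow_mul_add hm hn hρ (digitBox_natVec (b :: u)) y)

lemma clampSt_mem_accept_iff (hm : IsSmall k c m) (hn : IsLarge k c n) (x : ℤ) :
    clampSt m n x ∈ (ineqDFA ρ k m n (fun x y => x > y) c).accept ↔ c < x := by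
  have hmn := le_of_isSmall_of_isLarge hm hn
  simp only [IsSmall, IsLarge] at hm hn
  rw [clampSt_eq hmn]
  simp only [ineqDFA, Set.mem_ofPred_eq, Option.some.injEq, exists_eq_left', gt_iff_lt]
  omega

lemma evalFrom_some_mem_accept_iff (hm : IsSmall k c m) (hn : IsLarge k c n) (hρ : 0 < ρ)
    (z : Finset.Icc m n) (w : List (Letter ρ r)) :
    (ineqDFA ρ k m n (fun x y => x > y) c).evalFrom (some z) w ∈
        (ineqDFA ρ k m n (fun x y => x > y) c).accept ↔
      c < (ρ : ℤ) ^ w.length * z + tval k (natVec ρ r w) := by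
  have hz : some z = clampSt m n z := by
    have := Finset.mem_Icc.mp z.2
    rw [clampSt_eq (le_of_isSmall_of_isLarge hm hn)]
    exact congrArg some (Subtype.ext (by dsimp only; omega))
  rw [hz, evalFrom_clampSt hm hn hρ, clampSt_mem_accept_iff hm hn]

lemma evalFrom_none_cons_mem_accept_iff (hm : IsSmall k c m) (hn : IsLarge k c n)
    (hρ : 0 < ρ) (b : Letter ρ r) (w : List (Letter ρ r)) :
    (ineqDFA ρ k m n (fun x y => x > y) c).evalFrom none (b :: w) ∈
        (ineqDFA ρ k m n (fun x y => x > y) c).accept ↔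
      c < (ρ : ℤ) ^ w.length * tval k (sgnLetter b) + tval k (natVec ρ r w) := by
  rw [DFA.evalFrom_cons]
  exact (evalFrom_clampSt hm hn hρ _ w _).symm ▸ clampSt_mem_accept_iff hm hn _

lemma stEquiv_some_some_iff (hm : IsSmall k c m) (hn : IsLarge k c n) (hρ : 0 < ρ)
    (p q : Finset.Icc m n) :
    stEquiv (ineqDFA ρ k m n (fun x y => x > y) c) (some p) (some q) ↔ ValEquiv ρ k c p q := by
  constructor
  · intro h s v hv
    obtain ⟨w, rfl, rfl⟩ := exists_natVec_eq hρ hv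
    simpa only [evalFrom_some_mem_accept_iff hm hn hρ] using h w
  · intro h w
    simpa only [evalFrom_some_mem_accept_iff hm hn hρ] using h _ _ (digitBox_natVec w)

lemma ValEquiv.of_stEquiv_none (hm : IsSmall k c m) (hn : IsLarge k c n) (hρ : 0 < ρ)
    {z : Finset.Icc m n} (h : stEquiv (ineqDFA ρ k m n (fun x y => x > y) c) none (some z))
    (b : Letter ρ r) :
    ValEquiv ρ k c (tval k (sgnLetter b)) ((ρ : ℤ) * z + tval k (letterInt b)) := by
  intro s v hv
  obtain ⟨w, rfl, rfl⟩ := exists_natVec_eq hρ hv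
  have := h (b :: w)
  rwa [evalFrom_none_cons_mem_accept_iff hm hn hρ, evalFrom_some_mem_accept_iff hm hn hρ,
    natVec_cons, List.length_cons, pow_succ_mul_add_tval] at this

end Automaton

section Classes

variable {ρ r : ℕ} {k : Fin r → ℤ} {c x y : ℤ}

lemma not_lt_of_le_neg_posNorm (hc : 0 ≤ c) (hρ : 0 < ρ) (hx : x ≤ -posNorm k) {s : ℕ}
    {v : Fin r → ℤ} (hv : DigitBox ρ s v) : ¬ c < (ρ : ℤ) ^ s * x + tval k v := by
  have hR : (1 : ℤ) ≤ (ρ : ℤ) ^ s := one_le_pow₀ (by exact_mod_cast hρ)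
  have hT := (hv.tval_mem_Icc k).2
  nlinarith [posNorm_nonneg k]

lemma valEquiv_of_le_neg_posNorm (hc : 0 ≤ c) (hρ : 0 < ρ) (hx : x ≤ -posNorm k)
    (hy : y ≤ -posNorm k) : ValEquiv ρ k c x y := fun _ _ hv =>
  iff_of_false (not_lt_of_le_neg_posNorm hc hρ hx hv) (not_lt_of_le_neg_posNorm hc hρ hy hv)

/-- Appending `s` maximal digits on the positive coefficients maps `y` to
`ρ^s·(y + ‖t‖⁺) - ‖t‖⁺`. -/
lemma exists_lt_of_neg_posNorm_lt (hρ : 2 ≤ ρ) (hy : -posNorm k < y) :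
    ∃ (s : ℕ) (v : Fin r → ℤ), DigitBox ρ s v ∧ c < (ρ : ℤ) ^ s * y + tval k v := by
  obtain ⟨s, hs⟩ := pow_unbounded_of_one_lt (c + posNorm k) (by exact_mod_cast hρ : (1 : ℤ) < ρ)
  have hR : (1 : ℤ) ≤ (ρ : ℤ) ^ s := one_le_pow₀ (by exact_mod_cast (by omega : 1 ≤ ρ))
  refine ⟨s, fun i => if 0 < k i then (ρ : ℤ) ^ s - 1 else 0, fun i => ?_, ?_⟩
  · dsimp only
    split_ifs <;> constructor <;> linarith
  · rw [tval_ite_pos]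
    nlinarith [mul_le_mul_of_nonneg_left (show 1 ≤ y + posNorm k by omega)
      (by linarith : (0 : ℤ) ≤ (ρ : ℤ) ^ s)]

lemma not_valEquiv_of_le_of_lt (hc : 0 ≤ c) (hρ : 2 ≤ ρ) (hx : x ≤ -posNorm k)
    (hy : -posNorm k < y) : ¬ ValEquiv ρ k c x y := fun h => by
  obtain ⟨s, v, hv, hyv⟩ := exists_lt_of_neg_posNorm_lt (c := c) hρ hy
  exact not_lt_of_le_neg_posNorm hc (by omega) hx hv ((h s v hv).mpr hyv)

/-- Some `t[v]` on `s`-digit vectors equals the threshold `c + 1 - ρ^s·y` (if `x < y`) or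
`c - ρ^s·y` (if `x > y`) exactly. -/
lemma not_valEquiv_of_mem_Ioo (hρ : 2 ≤ ρ) (hc : 0 ≤ c) (hgcd : gcdT k = 1)
    (hy1 : -posNorm k < y) (hy2 : y < negNorm k) (hxy : x ≠ y) : ¬ ValEquiv ρ k c x y := by
  intro h
  obtain ⟨C, hC⟩ := exists_tval_eq hgcd
  have hP := posNorm_nonneg k
  have hN := negNorm_nonneg k
  obtain ⟨s, hs⟩ := pow_unbounded_of_one_lt (|C| + c + posNorm k + negNorm k)
    (by exact_mod_cast hρ : (1 : ℤ) < ρ)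
  have hR : (0 : ℤ) ≤ (ρ : ℤ) ^ s := by positivity
  have hC' := le_abs_self C
  have hC0 := abs_nonneg C
  have hy1' := mul_le_mul_of_nonneg_left (show 1 - posNorm k ≤ y by omega) hR
  have hy2' := mul_le_mul_of_nonneg_left (show y ≤ negNorm k - 1 by omega) hR
  have hit : ∀ z, c - (ρ : ℤ) ^ s * y ≤ z → z ≤ c + 1 - (ρ : ℤ) ^ s * y →
      ∃ v, DigitBox ρ s v ∧ tval k v = z := fun z hz1 hz2 => by
    obtain ⟨v, hv, hvz⟩ := hC ((ρ : ℤ) ^ s - 1) z (by linarith) (by linarith)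
    exact ⟨v, fun i => ⟨(hv i).1, by linarith [(hv i).2]⟩, hvz⟩
  rcases hxy.lt_or_gt with hlt | hlt
  · have hx := mul_le_mul_of_nonneg_left (show x ≤ y - 1 by omega) hR
    obtain ⟨v, hv, hvz⟩ := hit (c + 1 - (ρ : ℤ) ^ s * y) (by linarith) le_rfl
    have := (h s v hv).mpr (by rw [hvz]; linarith)
    rw [hvz] at this
    linarith
  · have hx := mul_le_mul_of_nonneg_left (show y + 1 ≤ x by omega) hR
    obtain ⟨v, hv, hvz⟩ := hit (c - (ρ : ℤ) ^ s * y) le_rfl (by linarith)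
    have := (h s v hv).mp (by rw [hvz]; linarith)
    rw [hvz] at this
    linarith

lemma memIvl_of_le_of_le {d : ℕ → ℤ} {j : ℕ} {a b z : ℤ} (ha : memIvl d j a) (hb : memIvl d j b)
    (haz : a ≤ z) (hzb : z ≤ b) : memIvl d j z :=
  ⟨ha.1.trans haz, hb.2.imp_right hzb.trans_lt⟩

lemma lt_of_memIvl {d : ℕ → ℤ} {i : ℕ} {x : ℤ} (hi : 2 ≤ i) (hx : memIvl d i x) :
    x < d (i - 1) :=
  hx.2.resolve_left (by omega)

lemma le_mul_add_tval_letterInt (hρ : 0 < ρ) (hx : negNorm k ≤ x) (b : Letter ρ r) :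
    x ≤ (ρ : ℤ) * x + tval k (letterInt b) := by
  have hT := (tval_mem_Icc k (letterInt_mem b)).1
  have : (1 : ℤ) ≤ ρ := by exact_mod_cast hρ
  nlinarith

end Classes

structure IsBoundarySeq (ρ : ℕ) {r : ℕ} (k : Fin r → ℤ) (c : ℤ) (ℓ : ℕ) (d : ℕ → ℤ) : Prop where
  one_le : 1 ≤ ℓ
  first : d 1 = max (c + 1) (negNorm k)
  last : d ℓ = negNorm k
  negNorm_lt : ∀ i, 1 ≤ i → i < ℓ → negNorm k < d i
  succ_lt : ∀ i, 1 ≤ i → i < ℓ → d (i + 1) < d i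
  step : ∀ i, 1 ≤ i → i < ℓ → seqStepProp ρ k d i (d (i + 1))
  le_of_step : ∀ i, 1 ≤ i → i < ℓ → ∀ x, negNorm k ≤ x → seqStepProp ρ k d i x → d (i + 1) ≤ x

namespace IsBoundarySeq

variable {ρ r : ℕ} {k : Fin r → ℤ} {c : ℤ} {ℓ : ℕ} {d : ℕ → ℤ} (hd : IsBoundarySeq ρ k c ℓ d)
include hd

lemma antitone {a b : ℕ} (ha : 1 ≤ a) (hab : a ≤ b) (hb : b ≤ ℓ) : d b ≤ d a := by
  induction b, hab using Nat.le_induction with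
  | base => exact le_rfl
  | succ b hab ih => exact (hd.succ_lt b (by omega) (by omega)).le.trans (ih (by omega))

lemma negNorm_le {i : ℕ} (hi1 : 1 ≤ i) (hi : i ≤ ℓ) : negNorm k ≤ d i := by
  rcases hi.eq_or_lt with rfl | hi
  · exact hd.last.ge
  · exact (hd.negNorm_lt i hi1 hi).le

lemma lt_iff_eq_one {i : ℕ} {x : ℤ} (hi1 : 1 ≤ i) (hi : i ≤ ℓ) (hx : memIvl d i x) :
    c < x ↔ i = 1 := by
  have hd1 := hd.first
  rcases hi1.eq_or_lt with rfl | hi2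
  · have := hx.1
    simp only [iff_true]
    omega
  · have hN := hd.negNorm_lt 1 le_rfl (by omega)
    have h1 := hd.antitone le_rfl (by omega : 1 ≤ i - 1) (by omega)
    have := lt_of_memIvl hi2 hx
    omega

lemma exists_memIvl {z : ℤ} (hz : negNorm k ≤ z) : ∃ i, 1 ≤ i ∧ i ≤ ℓ ∧ memIvl d i z := by
  classical
  have hex : ∃ i, 1 ≤ i ∧ d i ≤ z := ⟨ℓ, hd.one_le, hd.last ▸ hz⟩
  obtain ⟨hi1, hiz⟩ := Nat.find_spec hex
  have hiℓ : Nat.find hex ≤ ℓ := Nat.find_min' hex ⟨hd.one_le, hd.last ▸ hz⟩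
  refine ⟨Nat.find hex, hi1, hiℓ, hiz, ?_⟩
  by_contra! h
  exact Nat.find_min hex (by omega : Nat.find hex - 1 < Nat.find hex) ⟨by omega, h.2⟩

lemma memIvl_one_step (hρ : 0 < ρ) {x : ℤ} (hx : memIvl d 1 x) (b : Letter ρ r) :
    memIvl d 1 ((ρ : ℤ) * x + tval k (letterInt b)) :=
  ⟨hx.1.trans (le_mul_add_tval_letterInt hρ ((hd.negNorm_le le_rfl hd.one_le).trans hx.1) b),
    Or.inl rfl⟩

lemma exists_memIvl_step (hρ : 0 < ρ) {i : ℕ} (hi2 : 2 ≤ i) (hi : i ≤ ℓ) (b : Letter ρ r) :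
    ∃ j, 1 ≤ j ∧ j < i ∧ memIvl d j ((ρ : ℤ) * (d (i - 1) - 1) + tval k (letterInt b)) ∧
      ∀ x, memIvl d i x → memIvl d j ((ρ : ℤ) * x + tval k (letterInt b)) := by
  obtain ⟨j, hj1, hji, hlow, hhigh⟩ := hd.step (i - 1) (by omega) (by omega) b
  rw [Nat.sub_add_cancel (by omega : 1 ≤ i)] at hlow
  refine ⟨j, hj1, by omega, hhigh, fun x hx => memIvl_of_le_of_le hlow hhigh ?_ ?_⟩
  · have := hx.1
    have : (0 : ℤ) ≤ ρ := by positivity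
    nlinarith
  · have := lt_of_memIvl hi2 hx
    have : (0 : ℤ) ≤ ρ := by positivity
    nlinarith

lemma valEquiv_of_memIvl (hρ : 0 < ρ) {i : ℕ} {x y : ℤ} (hi1 : 1 ≤ i) (hi : i ≤ ℓ)
    (hx : memIvl d i x) (hy : memIvl d i y) : ValEquiv ρ k c x y := by
  intro s
  induction s generalizing i x y with
  | zero =>
    intro v hv
    rw [hv.eq_zero, pow_zero, one_mul, one_mul, tval_zero_right, add_zero, add_zero,
      hd.lt_iff_eq_one hi1 hi hx, hd.lt_iff_eq_one hi1 hi hy]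
  | succ s ih =>
    intro v hv
    obtain ⟨b, v', hv', rfl⟩ := hv.exists_cons hρ
    rw [pow_succ_mul_add_tval, pow_succ_mul_add_tval]
    rcases hi1.eq_or_lt with rfl | hi2
    · exact ih le_rfl hd.one_le (hd.memIvl_one_step hρ hx b) (hd.memIvl_one_step hρ hy b) v' hv'
    · obtain ⟨j, hj1, hji, -, hstep⟩ := hd.exists_memIvl_step hρ hi2 hi b
      exact ih hj1 (by omega) (hstep x hx) (hstep y hy) v' hv'

/-- Below `d_i`, minimality of `d_i` yields a letter sending `y` to a class other than the
common class of the images of `[d_i, d_{i-1})`; induct on the smaller class index. -/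
lemma not_valEquiv_of_memIvl_of_lt (hρ : 0 < ρ) {i i' : ℕ} {x y : ℤ} (hi1 : 1 ≤ i)
    (hii' : i < i') (hi' : i' ≤ ℓ) (hx : memIvl d i x) (hy : memIvl d i' y) :
    ¬ ValEquiv ρ k c x y := by
  induction i using Nat.strong_induction_on generalizing i' x y with
  | _ i ih =>
    intro h
    rcases hi1.eq_or_lt with rfl | hi2
    · have := h.lt_iff
      rw [hd.lt_iff_eq_one le_rfl (by omega) hx, hd.lt_iff_eq_one (by omega) hi' hy] at this
      omega
    have hyN : negNorm k ≤ y := (hd.negNorm_le (by omega) hi').trans hy.1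
    have hyi : y < d i :=
      (lt_of_memIvl (by omega) hy).trans_le (hd.antitone hi1 (by omega) (by omega))
    have hnot : ¬ seqStepProp ρ k d (i - 1) y := fun hstep => by
      have := hd.le_of_step (i - 1) (by omega) (by omega) y hyN hstep
      rw [Nat.sub_add_cancel hi1] at this
      omega
    simp only [seqStepProp, not_forall, not_exists, not_and] at hnot
    obtain ⟨b, hb⟩ := hnot
    obtain ⟨j, hj1, hji, hjd, hjx⟩ := hd.exists_memIvl_step hρ hi2 (by omega) b
    obtain ⟨j', hj'1, hj'ℓ, hj'y⟩ :=
      hd.exists_memIvl (hyN.trans (le_mul_add_tval_letterInt hρ hyN b))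
    have hjj' : j ≠ j' := fun hj => hb j hj1 (by omega) (hj ▸ hj'y) hjd
    rcases hjj'.lt_or_gt with hlt | hlt
    · exact ih j hji hj1 hlt hj'ℓ (hjx x hx) hj'y (h.step b)
    · exact ih j' (by omega) hj'1 hlt (by omega) hj'y (hjx x hx) (h.step b).symm

end IsBoundarySeq

theorem valEquiv_iff {ρ r : ℕ} {k : Fin r → ℤ} {c : ℤ} {ℓ : ℕ} {d : ℕ → ℤ} (hρ : 2 ≤ ρ)
    (hc : 0 ≤ c) (hgcd : gcdT k = 1) (hd : IsBoundarySeq ρ k c ℓ d) {x y : ℤ} :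
    ValEquiv ρ k c x y ↔ x = y ∨ (x ≤ -posNorm k ∧ y ≤ -posNorm k) ∨
      ∃ i, 1 ≤ i ∧ i ≤ ℓ ∧ memIvl d i x ∧ memIvl d i y := by
  constructor
  · intro h
    rcases eq_or_ne x y with hxy | hxy
    · exact Or.inl hxy
    right
    rcases le_or_gt x (-posNorm k) with hx | hx <;> rcases le_or_gt y (-posNorm k) with hy | hy
    · exact Or.inl ⟨hx, hy⟩
    · exact absurd h (not_valEquiv_of_le_of_lt hc hρ hx hy)
    · exact absurd h.symm (not_valEquiv_of_le_of_lt hc hρ hy hx)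
    right
    rcases lt_or_ge y (negNorm k) with hyN | hyN
    · exact absurd h (not_valEquiv_of_mem_Ioo hρ hc hgcd hy hyN hxy)
    rcases lt_or_ge x (negNorm k) with hxN | hxN
    · exact absurd h.symm (not_valEquiv_of_mem_Ioo hρ hc hgcd hx hxN hxy.symm)
    obtain ⟨i, hi1, hi, hxi⟩ := hd.exists_memIvl hxN
    obtain ⟨i', hi'1, hi', hyi'⟩ := hd.exists_memIvl hyN
    rcases lt_trichotomy i i' with hlt | rfl | hlt
    · exact absurd h (hd.not_valEquiv_of_memIvl_of_lt (by omega) hi1 hlt hi' hxi hyi')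
    · exact ⟨i, hi1, hi, hxi, hyi'⟩
    · exact absurd h.symm (hd.not_valEquiv_of_memIvl_of_lt (by omega) hi'1 hlt hi hyi' hxi)
  · rintro (rfl | ⟨hx, hy⟩ | ⟨i, hi1, hi, hx, hy⟩)
    · exact ValEquiv.refl x
    · exact valEquiv_of_le_neg_posNorm hc (by omega) hx hy
    · exact hd.valEquiv_of_memIvl (by omega) hi1 hi hx hy

/-- For the two letters below, `t[σ(b)]` is `‖t‖⁻` (live) resp. `-‖t‖⁺` (dead), while `b` moves
a dead `z` to a dead value resp. a live `z` to a live value. -/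
lemma not_stEquiv_none_some {ρ r : ℕ} {k : Fin r → ℤ} {c m n : ℤ} (hρ : 2 ≤ ρ) (hc : 0 ≤ c)
    (hgcd : gcdT k = 1) (hm : IsSmall k c m) (hn : IsLarge k c n) (z : Finset.Icc m n) :
    ¬ stEquiv (ineqDFA ρ k m n (fun x y => x > y) c) none (some z) := by
  intro h
  have hequiv := ValEquiv.of_stEquiv_none hm hn (by omega) h
  have hP := posNorm_nonneg k
  have hPN := one_le_posNorm_add_negNorm hgcd
  have hρ' : (2 : ℤ) ≤ ρ := by exact_mod_cast hρ
  rcases le_or_gt (z : ℤ) (-posNorm k) with hz | hz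
  · let b : Letter ρ r := fun i => if 0 < k i then ⟨0, by omega⟩ else ⟨1, by omega⟩
    have hσ : sgnLetter b = fun i => if 0 < k i then 0 else -1 := funext fun i => by
      by_cases hi : 0 < k i <;> simp [sgnLetter, b, hi]
    have hb : letterInt b = fun i => if 0 < k i then 0 else 1 := funext fun i => by
      by_cases hi : 0 < k i <;> simp [letterInt, b, hi]
    have := hequiv b
    rw [hσ, hb, tval_ite_pos, tval_ite_pos] at this
    exact not_valEquiv_of_le_of_lt hc hρ (by nlinarith) (by linarith) this.symm
  · let b : Letter ρ r := fun i => if 0 < k i then ⟨ρ - 1, by omega⟩ else ⟨0, by omega⟩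
    have hσ : sgnLetter b = fun i => if 0 < k i then -1 else 0 := funext fun i => by
      by_cases hi : 0 < k i <;> simp [sgnLetter, b, hi]; omega
    have hb : letterInt b = fun i => if 0 < k i then (ρ : ℤ) - 1 else 0 := funext fun i => by
      by_cases hi : 0 < k i <;> simp [letterInt, b, hi]; omega
    have := hequiv b
    rw [hσ, hb, tval_ite_pos, tval_ite_pos] at this
    exact not_valEquiv_of_le_of_lt hc hρ (by linarith) (by nlinarith) this

theorem stmt_4_general (ρ r : ℕ) (hρ : 2 ≤ ρ) (k : Fin r → ℤ)
    (hgcd : gcdT k = 1) (c : ℤ) (hc : 0 ≤ c)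
    (m n : ℤ) (hm : m = min c (-posNorm k) - 1) (hn : n = max c (negNorm k) + 1)
    (ℓ : ℕ) (hℓ : 1 ≤ ℓ) (d : ℕ → ℤ)
    (hd1 : d 1 = max (c + 1) (negNorm k))
    (hdlast : d ℓ = negNorm k)
    (hdgt : ∀ i, 1 ≤ i → i < ℓ → negNorm k < d i)
    (hdec : ∀ i, 1 ≤ i → i < ℓ → d (i + 1) < d i)
    (hmin : ∀ i, 1 ≤ i → i < ℓ →
      negNorm k ≤ d (i + 1) ∧ seqStepProp ρ k d i (d (i + 1)) ∧
      ∀ x : ℤ, negNorm k ≤ x → seqStepProp ρ k d i x → d (i + 1) ≤ x) :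
    ∀ p q : Option ↥(Finset.Icc m n),
      stEquiv (ineqDFA ρ k m n (fun x y => x > y) c) p q ↔
        (p = q ∨
         (∃ zp zq : ↥(Finset.Icc m n), p = some zp ∧ q = some zq ∧
            (zp.val = m ∨ zp.val = m + 1) ∧ (zq.val = m ∨ zq.val = m + 1)) ∨
         (∃ i, 1 ≤ i ∧ i ≤ ℓ ∧
            ∃ zp zq : ↥(Finset.Icc m n), p = some zp ∧ q = some zq ∧
              memIvl d i zp.val ∧ memIvl d i zq.val)) := by
  have hP := posNorm_nonneg k
  have hsmall : IsSmall k c m := by rw [IsSmall, hm]; omega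
  have hlarge : IsLarge k c n := by rw [IsLarge, hn]; omega
  have hd : IsBoundarySeq ρ k c ℓ d := ⟨hℓ, hd1, hdlast, hdgt, hdec,
    fun i h1 h2 => (hmin i h1 h2).2.1, fun i h1 h2 => (hmin i h1 h2).2.2⟩
  have hdead : ∀ z : Finset.Icc m n, (z : ℤ) ≤ -posNorm k ↔ (z : ℤ) = m ∨ (z : ℤ) = m + 1 :=
    fun z => by have := (Finset.mem_Icc.mp z.2).1; omega
  rintro (_ | p) (_ | q)
  · exact iff_of_true (fun _ => Iff.rfl) (Or.inl rfl)
  · simpa using not_stEquiv_none_some hρ hc hgcd hsmall hlarge q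
  · simpa [stEquiv_comm (q := none)] using not_stEquiv_none_some hρ hc hgcd hsmall hlarge p
  · rw [stEquiv_some_some_iff hsmall hlarge (by omega), valEquiv_iff hρ hc hgcd hd, hdead, hdead]
    simp only [Option.some.injEq, exists_and_left, exists_eq_left']
    rw [Subtype.ext_iff]

/-- Lemma `equivalent_states`.
For the inequation `t > c` with `c ≥ 0` and `gcd(t) = 1`, consider
`A = A^{t>c}_{(m,n)}` with `m` the maximal small and `n` the minimal large state,
and let `d_1 > … > d_ℓ` be the sequence defined in the paper
(`d_0 = ∞`, `d_1 = max{c+1, ‖t‖⁻}`, each `d_{i+1}` minimal ≥ `‖t‖⁻` with the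
interval property, ending at `d_ℓ = ‖t‖⁻`), and `R = {m, m+1}`.
Then two states `p, q` of `A` are equivalent iff `p = q`, or `p, q ∈ R`, or
`p, q ∈ [d_i, d_{i-1})` for some `1 ≤ i ≤ ℓ`. -/
theorem stmt_4 (ρ r : ℕ) (hρ : 2 ≤ ρ) (k : Fin r → ℤ) (hk : Homog k)
    (hgcd : gcdT k = 1) (c : ℤ) (hc : 0 ≤ c)
    (m n : ℤ) (hm : m = min c (-posNorm k) - 1) (hn : n = max c (negNorm k) + 1)
    (ℓ : ℕ) (hℓ : 1 ≤ ℓ) (d : ℕ → ℤ)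
    (hd1 : d 1 = max (c + 1) (negNorm k))
    (hdlast : d ℓ = negNorm k)
    (hdgt : ∀ i, 1 ≤ i → i < ℓ → negNorm k < d i)
    (hdec : ∀ i, 1 ≤ i → i < ℓ → d (i + 1) < d i)
    (hmin : ∀ i, 1 ≤ i → i < ℓ →
      negNorm k ≤ d (i + 1) ∧ seqStepProp ρ k d i (d (i + 1)) ∧
      ∀ x : ℤ, negNorm k ≤ x → seqStepProp ρ k d i x → d (i + 1) ≤ x) :
    ∀ p q : Option ↥(Finset.Icc m n),
      stEquiv (ineqDFA ρ k m n (fun x y => x > y) c) p q ↔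
        (p = q ∨
         (∃ zp zq : ↥(Finset.Icc m n), p = some zp ∧ q = some zq ∧
            (zp.val = m ∨ zp.val = m + 1) ∧ (zq.val = m ∨ zq.val = m + 1)) ∨
         (∃ i, 1 ≤ i ∧ i ≤ ℓ ∧
            ∃ zp zq : ↥(Finset.Icc m n), p = some zp ∧ q = some zq ∧
              memIvl d i zp.val ∧ memIvl d i zq.val)) :=
  stmt_4_general ρ r hρ k hgcd c hc m n hm hn ℓ hℓ d hd1 hdlast hdgt hdec hmin

end Presburger
end

section
/- Let ρ ≥ 2 and ℓ ≥ 1. For every natural number z with ρ^{ℓ−1} ≤ z ≤ ρ^ℓ − 2, there exist natural numbers x, y, z' with x, y, z' < ρ^ℓ such that x·y = ρ^ℓ·z + z'. -/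
/-! With `N = ρ^ℓ` and `x = z + 1`, take `y = N - ⌊N / x⌋`: writing `N = x q + r` with `r < x`
gives `x y = x N - (N - r) = N z + r`, and `y < N` because `q ≥ 1`. -/

theorem Nat.mul_sub_div_eq_mul_pred_add_mod (N k : ℕ) (hk : 0 < k) :
    k * (N - N / k) = N * (k - 1) + N % k := by
  have hdiv := Nat.div_add_mod N k
  have hle : N / k ≤ N := Nat.div_le_self N k
  zify [hle, hk] at hdiv ⊢
  linear_combination (-1 : ℤ) * hdiv

theorem Nat.exists_mul_eq_mul_add_of_add_two_le {N z : ℕ} (hz : z + 2 ≤ N) :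
    ∃ x y z' : ℕ, x < N ∧ y < N ∧ z' < N ∧ x * y = N * z + z' := by
  have hq : 0 < N / (z + 1) := Nat.div_pos (by omega) (Nat.succ_pos z)
  have hr : N % (z + 1) < z + 1 := Nat.mod_lt N (Nat.succ_pos z)
  refine ⟨z + 1, N - N / (z + 1), N % (z + 1), by omega, by omega, by omega, ?_⟩
  simpa using Nat.mul_sub_div_eq_mul_pred_add_mod N (z + 1) (Nat.succ_pos z)

theorem stmt_16_general (ρ ℓ : ℕ) (hρ : 2 ≤ ρ) (hℓ : 1 ≤ ℓ) (z : ℕ)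
    (h2 : z ≤ ρ ^ ℓ - 2) :
    ∃ x y z' : ℕ, x < ρ ^ ℓ ∧ y < ρ ^ ℓ ∧ z' < ρ ^ ℓ ∧
      x * y = ρ ^ ℓ * z + z' := by
  have hN : 2 ≤ ρ ^ ℓ := hρ.trans (Nat.le_self_pow (by omega) ρ)
  exact Nat.exists_mul_eq_mul_add_of_add_two_le (by omega)

/-- Lemma `mult_prefix`.
Let `ρ ≥ 2` and `ℓ ≥ 1`.  For every natural number `z` with
`ρ^{ℓ-1} ≤ z ≤ ρ^ℓ − 2` there are `x, y, z' < ρ^ℓ` with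
`x·y = ρ^ℓ·z + z'`. -/
theorem stmt_16 (ρ ℓ : ℕ) (hρ : 2 ≤ ρ) (hℓ : 1 ≤ ℓ) (z : ℕ)
    (h1 : ρ ^ (ℓ - 1) ≤ z) (h2 : z ≤ ρ ^ ℓ - 2) :
    ∃ x y z' : ℕ, x < ρ ^ ℓ ∧ y < ρ ^ ℓ ∧ z' < ρ ^ ℓ ∧
      x * y = ρ ^ ℓ * z + z' :=
  stmt_16_general ρ ℓ hρ hℓ z h2
end

section
/- Let ρ ≥ 2 and m ≥ 0, and let MULT_m := {(a,b,c) ∈ ℤ³ : 0 ≤ a < ρ^m, 0 ≤ b < ρ^m, and a·b = c}. Every DFA over the alphabet Σ³ representing MULT_m has at least ρ^m states. -/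
/-!
Take the prefixes `x_c = 0 (0,0,c)` for `c < ρ^m` (all numbers written with `m` digits after a
leading zero). The suffix `y_a = (ρ^m - 1, a + 1, ρ^m - 1 - a)` turns `x_c` into a word encoding
`(ρ^m - 1, a + 1, c·ρ^m + ρ^m - 1 - a)`, and since `(ρ^m - 1)(a + 1) = a·ρ^m + ρ^m - 1 - a` this
is a triple of `MULT_m` exactly when `c = a`. So `y_u` separates `x_u` from `x_v` whenever
`u < v`, and the `ρ^m` prefixes must reach pairwise distinct states.
-/

namespace DFA

theorem append_mem_accepts_iff_of_eval_eq {α σ : Type*} (M : DFA α σ)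
    {x x' : List α} (h : M.eval x = M.eval x') (z : List α) :
    x ++ z ∈ M.accepts ↔ x' ++ z ∈ M.accepts := by
  rw [← Language.mem_leftQuotient, ← Language.mem_leftQuotient,
    Language.leftQuotient_accepts_apply, Language.leftQuotient_accepts_apply, h]

theorem card_le_of_distinguishes {α σ ι : Type*} [LinearOrder ι] [Fintype ι]
    [Fintype σ] (M : DFA α σ) (x y : ι → List α)
    (h : ∀ i j, i < j → ¬(x i ++ y i ∈ M.accepts ↔ x j ++ y i ∈ M.accepts)) :
    Fintype.card ι ≤ Fintype.card σ := by
  refine Fintype.card_le_of_injective (M.eval ∘ x) fun i j hij => ?_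
  by_contra hne
  rcases lt_or_gt_of_ne hne with hlt | hlt
  · exact h i j hlt (M.append_mem_accepts_iff_of_eval_eq hij _)
  · exact h j i hlt (M.append_mem_accepts_iff_of_eval_eq hij.symm _)

end DFA

namespace Presburger

theorem natVal_foldl (ρ : ℕ) (w : List ℕ) (acc : ℕ) :
    w.foldl (fun acc b => ρ * acc + b) acc = acc * ρ ^ w.length + natVal ρ w := by
  induction w generalizing acc with
  | nil => simp [natVal]
  | cons b u ih =>
    simp only [List.foldl_cons, natVal, List.length_cons, Nat.mul_zero, Nat.zero_add] at *
    rw [ih (ρ * acc + b), ih b]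
    ring

theorem natVal_append (ρ : ℕ) (u v : List ℕ) :
    natVal ρ (u ++ v) = natVal ρ u * ρ ^ v.length + natVal ρ v := by
  simp only [natVal, List.foldl_append]
  exact natVal_foldl ρ v _

section Vectors

variable {ρ r : ℕ}

theorem natVec_append (u v : List (Letter ρ r)) (i : Fin r) :
    natVec ρ r (u ++ v) i = natVec ρ r u i * (ρ : ℤ) ^ v.length + natVec ρ r v i := by
  simp [natVec, natVal_append]

theorem natVec_singleton (b : Letter ρ r) (i : Fin r) : natVec ρ r [b] i = ((b i : ℕ) : ℤ) := by
  simp [natVec, natVal]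

theorem intVec_zero_cons [NeZero ρ] (w : List (Letter ρ r)) :
    intVec ρ r (0 :: w) = natVec ρ r w := by
  funext i
  simp [intVec, intVal, natVec]

variable (ρ) [NeZero ρ]

def tupleWord : ℕ → (Fin r → ℕ) → List (Letter ρ r)
  | 0, _ => []
  | m + 1, v => tupleWord m (fun i => v i / ρ) ++ [fun i => Fin.ofNat ρ (v i)]

@[simp]
theorem length_tupleWord (m : ℕ) (v : Fin r → ℕ) : (tupleWord ρ m v).length = m := by
  induction m generalizing v with
  | zero => rfl
  | succ m ih => simp [tupleWord, ih]

theorem natVec_tupleWord (m : ℕ) (v : Fin r → ℕ) (i : Fin r) :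
    natVec ρ r (tupleWord ρ m v) i = ((v i % ρ ^ m : ℕ) : ℤ) := by
  induction m generalizing v with
  | zero => simp [tupleWord, natVec, natVal]
  | succ m ih =>
    rw [tupleWord, natVec_append, ih, natVec_singleton, pow_succ', Nat.mod_mul]
    simp only [Fin.val_ofNat, List.length_singleton]
    push_cast
    ring

end Vectors

def multSet (ρ m : ℕ) : Set (Fin 3 → ℤ) :=
  {a | 0 ≤ a 0 ∧ a 0 < (ρ : ℤ) ^ m ∧ 0 ≤ a 1 ∧ a 1 < (ρ : ℤ) ^ m ∧ a 0 * a 1 = a 2}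

section Multiplication

variable (ρ : ℕ) [NeZero ρ] (m : ℕ)

def multPrefix (c : ℕ) : List (Letter ρ 3) := 0 :: tupleWord ρ m ![0, 0, c]

def multSuffix (a : ℕ) : List (Letter ρ 3) := tupleWord ρ m ![ρ ^ m - 1, a + 1, ρ ^ m - 1 - a]

variable {ρ m}

theorem intVec_multPrefix_append_multSuffix {a c : ℕ} (hc : c < ρ ^ m) (ha : a + 1 < ρ ^ m) :
    intVec ρ 3 (multPrefix ρ m c ++ multSuffix ρ m a) =
      ![(ρ : ℤ) ^ m - 1, a + 1, c * (ρ : ℤ) ^ m + ((ρ : ℤ) ^ m - 1 - a)] := by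
  funext i
  rw [multPrefix, multSuffix, List.cons_append, intVec_zero_cons, natVec_append,
    natVec_tupleWord, natVec_tupleWord, length_tupleWord]
  fin_cases i <;> simp [Nat.mod_eq_of_lt, hc, ha, Nat.cast_sub, show 1 ≤ ρ ^ m by omega,
    show a ≤ ρ ^ m - 1 by omega, show ρ ^ m - 1 - a < ρ ^ m by omega,
    show ρ ^ m - 1 < ρ ^ m by omega]

theorem multPrefix_append_multSuffix_mem_iff {L : Language (Letter ρ 3)}
    (hL : Represents ρ 3 L (multSet ρ m)) {a c : ℕ} (hc : c < ρ ^ m) (ha : a + 1 < ρ ^ m) :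
    multPrefix ρ m c ++ multSuffix ρ m a ∈ L ↔ c = a := by
  have hP : (ρ : ℤ) ^ m ≠ 0 := pow_ne_zero _ (Nat.cast_ne_zero.mpr (NeZero.ne ρ))
  have haP : (a : ℤ) + 1 < (ρ : ℤ) ^ m := by exact_mod_cast ha
  have hne : multPrefix ρ m c ++ multSuffix ρ m a ≠ [] := by simp [multPrefix]
  rw [hL, and_iff_right hne, intVec_multPrefix_append_multSuffix hc ha, multSet,
    Set.mem_ofPred_eq]
  simp only [Matrix.cons_val_zero, Matrix.cons_val_one, Matrix.cons_val_two, Matrix.head_cons,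
    Matrix.tail_cons]
  constructor
  · rintro ⟨-, -, -, -, hprod⟩
    have : ((a : ℤ) - c) * (ρ : ℤ) ^ m = 0 := by linear_combination hprod
    simpa [hP, sub_eq_zero, eq_comm] using this
  · rintro rfl
    exact ⟨by omega, by omega, by omega, by omega, by ring⟩

end Multiplication

/-- Lemma `mbit_multiplication`.
Every DFA over the alphabet `Σ³` representing
`MULT_m = {(a,b,c) ∈ ℤ³ : 0 ≤ a < ρ^m, 0 ≤ b < ρ^m, a·b = c}` has at least
`ρ^m` states. -/
theorem stmt_17 (ρ : ℕ) (hρ : 2 ≤ ρ) (m : ℕ)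
    (σ : Type*) [Fintype σ] (M : DFA (Letter ρ 3) σ)
    (hM : DFARepresents ρ 3 M
      {a | 0 ≤ a 0 ∧ a 0 < (ρ : ℤ) ^ m ∧ 0 ≤ a 1 ∧ a 1 < (ρ : ℤ) ^ m ∧
           a 0 * a 1 = a 2}) :
    ρ ^ m ≤ Fintype.card σ := by
  have : NeZero ρ := ⟨by omega⟩
  simpa using M.card_le_of_distinguishes (fun c : Fin (ρ ^ m) => multPrefix ρ m c)
    (fun a => multSuffix ρ m a) fun u v huv => by
      have hu : (u : ℕ) + 1 < ρ ^ m := by omega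
      rw [multPrefix_append_multSuffix_mem_iff hM u.isLt hu,
        multPrefix_append_multSuffix_mem_iff hM v.isLt hu]
      omega

end Presburger
end
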